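/- In a ν-binary tree, every non-root node has either a node strictly above it in the same column or a node strictly to its left in the same row (and by ν-compatibility, not both). -/

import Mathlib

/-- Steps of a (Schröder) lattice path: north, east, diagonal. -/
inductive Step : Type
  | N | E | D
deriving DecidableEq, Repr

/-- Total horizontal displacement of a path. -/
def eLen (p : List Step) : ℕ := p.count Step.E + p.count Step.D

/-- Total vertical displacement of a path. -/
def nLen (p : List Step) : ℕ := p.count Step.N + p.count Step.D

/-- A lattice path uses only `N` and `E` steps. -/
def IsLatticePath (ν : List Step) : Prop := Step.D ∉ ν

/-- `colVal p x` is twice the starting height of the step of `p` crossing the vertical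
strip between abscissas `x` and `x+1`, plus `1` if that step is diagonal.  Comparing these
values columnwise is equivalent to comparing the heights of the paths over each strip. -/
def colVal : List Step → ℕ → ℕ
  | [], _ => 0
  | Step.N :: p, x => colVal p x + 2
  | Step.E :: _, 0 => 0
  | Step.E :: p, x+1 => colVal p x
  | Step.D :: _, 0 => 1
  | Step.D :: p, x+1 => colVal p x + 2

/-- `π` stays weakly above `ρ` (same endpoints intended). -/
def WeaklyAbove (π ρ : List Step) : Prop := ∀ x, colVal ρ x ≤ colVal π x

/-- Replace every peak (consecutive `NE`) of a path by a diagonal step; applied to `ν`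
this gives the path `μ` of the large ν-Schröder path definition. -/
def cutPeaks : List Step → List Step
  | [] => []
  | Step.N :: Step.E :: p => Step.D :: cutPeaks p
  | s :: p => s :: cutPeaks p

/-- A ν-Dyck path: an `N,E` path with the same endpoints as `ν` staying weakly above `ν`. -/
def IsNuDyck (ν π : List Step) : Prop :=
  Step.D ∉ π ∧ eLen π = eLen ν ∧ nLen π = nLen ν ∧ WeaklyAbove π ν

/-- A (small) ν-Schröder path: an `N,E,D` path with the same endpoints as `ν` staying weakly
above `ν` (this automatically forbids diagonal steps on the ν-diagonal). -/
def IsSmallSchroder (ν π : List Step) : Prop :=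
  eLen π = eLen ν ∧ nLen π = nLen ν ∧ WeaklyAbove π ν

/-- A large ν-Schröder path: an `N,E,D` path with the same endpoints as `ν` staying weakly
above the path obtained from `ν` by replacing each peak by a diagonal step. -/
def IsLargeSchroder (ν π : List Step) : Prop :=
  eLen π = eLen ν ∧ nLen π = nLen ν ∧ WeaklyAbove π (cutPeaks ν)

/-- Number of peaks (consecutive `NE` pairs). -/
def peaks (p : List Step) : ℕ := (p.zip p.tail).count (Step.N, Step.E)

/-- Number of valleys (consecutive `EN` pairs). -/
def valleys (p : List Step) : ℕ := (p.zip p.tail).count (Step.E, Step.N)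

/-- Lattice points at which valleys of a path occur (starting the path at `(x,y)`). -/
def valleyPts : List Step → ℕ → ℕ → List (ℕ × ℕ)
  | [], _, _ => []
  | Step.E :: p, x, y =>
      (if p.head? = some Step.N then [(x+1, y)] else []) ++ valleyPts p (x+1) y
  | Step.N :: p, x, y => valleyPts p x (y+1)
  | Step.D :: p, x, y => valleyPts p (x+1) (y+1)

/-- Lattice points at which high peaks (peaks strictly above `ν`) of a path occur. -/
def highPeakPts (ν : List Step) : List Step → ℕ → ℕ → List (ℕ × ℕ)
  | [], _, _ => []
  | Step.N :: p, x, y =>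
      (if p.head? = some Step.E ∧ colVal ν x < 2*(y+1) then [(x, y+1)] else []) ++
        highPeakPts ν p x (y+1)
  | Step.E :: p, x, y => highPeakPts ν p (x+1) y
  | Step.D :: p, x, y => highPeakPts ν p (x+1) (y+1)

/-- Number of high peaks of `π` relative to `ν`. -/
def highPeaks (ν π : List Step) : ℕ := (highPeakPts ν π 0 0).length

/-- j-th ν-Narayana number: number of ν-Dyck paths with exactly `j` valleys. -/
noncomputable def Nar (ν : List Step) (j : ℕ) : ℕ :=
  Nat.card {π : List Step // IsNuDyck ν π ∧ valleys π = j}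

/-- Number of small ν-Schröder paths with exactly `i` diagonal steps. -/
noncomputable def schNum (ν : List Step) (i : ℕ) : ℕ :=
  Nat.card {π : List Step // IsSmallSchroder ν π ∧ π.count Step.D = i}

/-- `lowH ν x` is the lowest height of a point of `ν` at abscissa `x`. -/
def lowH : List Step → ℕ → ℕ
  | _, 0 => 0
  | [], _+1 => 0
  | Step.N :: p, x+1 => lowH p (x+1) + 1
  | Step.E :: p, x+1 => lowH p x
  | Step.D :: p, x+1 => lowH p x + 1

/-- The lowest lattice path from `(0,0)` to `(b,a)` weakly above the line segment
from `(0,0)` to `(b,a)`. -/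
def nuAB (a b : ℕ) : List Step :=
  (List.range b).flatMap (fun x =>
    List.replicate (((x+1)*a + b - 1)/b - (x*a + b - 1)/b) Step.N ++ [Step.E])

/-- Number of large rational `(a,b)`-Schröder paths with `i` diagonal steps. -/
noncomputable def largeCount (a b i : ℕ) : ℕ :=
  Nat.card {π : List Step // IsLargeSchroder (nuAB a b) π ∧ π.count Step.D = i}

/-- Number of small rational `(a,b)`-Schröder paths with `i` diagonal steps. -/
noncomputable def smallCount (a b i : ℕ) : ℕ :=
  Nat.card {π : List Step // IsSmallSchroder (nuAB a b) π ∧ π.count Step.D = i}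

/-- Binomial coefficient with an integer lower entry (zero when negative). -/
def chooseZ (n : ℕ) (k : ℤ) : ℕ := if 0 ≤ k then n.choose k.toNat else 0

/-- The region weakly above `ν` in the rectangle `[0,b] × [0,a]`. -/
def InRegion (ν : List Step) (p : ℕ × ℕ) : Prop :=
  p.1 ≤ eLen ν ∧ p.2 ≤ nLen ν ∧ lowH ν p.1 ≤ p.2

/-- Two points of the region are ν-incompatible if one is strictly southwest of the other and
the rectangle they span lies in the region (equivalently its bottom-right corner does). -/
def Incompat (ν : List Step) (p q : ℕ × ℕ) : Prop :=
  ((p.1 < q.1 ∧ p.2 < q.2) ∨ (q.1 < p.1 ∧ q.2 < p.2)) ∧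
    InRegion ν (max p.1 q.1, min p.2 q.2)

/-- A ν-binary tree: a maximal set of pairwise ν-compatible points of the region. -/
def IsBinaryTree (ν : List Step) (T : Finset (ℕ × ℕ)) : Prop :=
  (∀ p ∈ T, InRegion ν p) ∧ (∀ p ∈ T, ∀ q ∈ T, ¬ Incompat ν p q) ∧
    ∀ r, InRegion ν r → (∀ p ∈ T, ¬ Incompat ν r p) → r ∈ T

/-- A ν-Schröder tree: pairwise ν-compatible points of the region containing the root
`(0,a)` and meeting every row and every column. -/
def IsSchroderTree (ν : List Step) (T : Finset (ℕ × ℕ)) : Prop :=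
  (∀ p ∈ T, InRegion ν p) ∧ (∀ p ∈ T, ∀ q ∈ T, ¬ Incompat ν p q) ∧
    (0, nLen ν) ∈ T ∧ (∀ y ≤ nLen ν, ∃ p ∈ T, p.2 = y) ∧ (∀ x ≤ eLen ν, ∃ p ∈ T, p.1 = x)

/-- One contraction step: delete a node, provided the result is still a ν-Schröder tree. -/
def ContractStep (ν : List Step) (T T' : Finset (ℕ × ℕ)) : Prop :=
  ∃ q ∈ T, T' = T.erase q ∧ IsSchroderTree ν T'

/-- `p` is a leaf of the (plane tree associated to the) node set `T`: no node strictly below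
it in its column and none strictly to its right in its row. -/
def IsLeafIn (T : Finset (ℕ × ℕ)) (p : ℕ × ℕ) : Prop :=
  (∀ q ∈ T, ¬(q.1 = p.1 ∧ q.2 < p.2)) ∧ (∀ q ∈ T, ¬(q.2 = p.2 ∧ p.1 < q.1))

/-- Starting points of vertical runs and ending points of horizontal runs of `ν`. -/
def leafPts (ν : List Step) : Finset (ℕ × ℕ) :=
  (valleyPts ν 0 0).toFinset ∪ (if ν.head? = some Step.N then {((0 : ℕ), (0 : ℕ))} else ∅) ∪
    (if ν.getLast? = some Step.E then {(eLen ν, nLen ν)} else ∅)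

/-- `horizNu ν x y`: maximal number of east steps that can be placed starting at `(x,y)`
before crossing `ν` (staying within the bounding rectangle). -/
def horizNu (ν : List Step) (x y : ℕ) : ℕ :=
  ((Finset.Icc 1 (eLen ν - x)).filter (fun k => lowH ν (x + k) ≤ y)).card

/-- No `N` step of the given path (started at `(x,y)`) has initial point with
`horizNu`-value `h`. -/
def noNAt (ν : List Step) (h : ℕ) : List Step → ℕ → ℕ → Prop
  | [], _, _ => True
  | Step.N :: p, x, y => horizNu ν x y ≠ h ∧ noNAt ν h p x (y+1)
  | Step.E :: p, x, y => noNAt ν h p (x+1) y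
  | Step.D :: p, x, y => noNAt ν h p (x+1) (y+1)

/-- Right contraction: replace a consecutive `EN` pair (a valley) by a `D` step. -/
def RightC (μ lam : List Step) : Prop :=
  ∃ p q, μ = p ++ Step.E :: Step.N :: q ∧ lam = p ++ Step.D :: q

/-- Left contraction: delete an `E` step together with the most recent preceding `N` step
whose initial point has the same `horizNu` statistic as the initial point of the `E` step,
shift the intermediate subpath, and place a `D` step at the initial point of the `N` step. -/
def LeftC (ν μ lam : List Step) : Prop :=
  ∃ p m q, μ = p ++ Step.N :: (m ++ Step.E :: q) ∧ lam = p ++ Step.D :: (m ++ q) ∧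
    horizNu ν (eLen p) (nLen p)
      = horizNu ν (eLen (p ++ Step.N :: m)) (nLen (p ++ Step.N :: m)) ∧
    noNAt ν (horizNu ν (eLen (p ++ Step.N :: m)) (nLen (p ++ Step.N :: m)))
      m (eLen p) (nLen p + 1)

/-- Diagonal contraction: delete an `E` step ending at the initial point `r` of a `D` step,
together with the most recent preceding `N` step whose initial point `s` satisfies
`horizNu s = horizNu r`, shift the intermediate subpath, and place a `D` step at `s`. -/
def DiagC (ν μ lam : List Step) : Prop :=
  ∃ p m q, μ = p ++ Step.N :: (m ++ Step.E :: Step.D :: q) ∧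
    lam = p ++ Step.D :: (m ++ Step.D :: q) ∧
    horizNu ν (eLen p) (nLen p)
      = horizNu ν (eLen (p ++ Step.N :: m) + 1) (nLen (p ++ Step.N :: m)) ∧
    noNAt ν (horizNu ν (eLen (p ++ Step.N :: m) + 1) (nLen (p ++ Step.N :: m)))
      m (eLen p) (nLen p + 1)

/-- Cover relation of the contraction poset of ν-Schröder paths. -/
def Covers (ν μ lam : List Step) : Prop :=
  IsSmallSchroder ν μ ∧ IsSmallSchroder ν lam ∧
    (RightC μ lam ∨ LeftC ν μ lam ∨ DiagC ν μ lam)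

/-- The Morse matching: `σ` (having a `D` step preceded by no valley) is matched with the
path `π` obtained by replacing the first such `D` step by `EN`. -/
def MorseM (ν : List Step) : Set (List Step × List Step) :=
  { z | ∃ p q, Step.D ∉ p ∧ valleys p = 0 ∧
      z.2 = p ++ Step.D :: q ∧ z.1 = p ++ Step.E :: Step.N :: q ∧ IsSmallSchroder ν z.2 }

/-- Twice the area between a small ν-Schröder path and `ν`. -/
def area2 (ν π : List Step) : ℕ :=
  ∑ x ∈ Finset.range (eLen ν), (colVal π x - colVal ν x)

/-- An `(I,J̄)`-forest: increasing, non-crossing arcs. -/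
def IsIJForest (I J : Finset ℕ) (F : Finset (ℕ × ℕ)) : Prop :=
  (∀ a ∈ F, a.1 ∈ I ∧ a.2 ∈ J ∧ a.1 < a.2) ∧
    (∀ a ∈ F, ∀ a' ∈ F, ¬(a.1 < a'.1 ∧ a'.1 < a.2 ∧ a.2 < a'.2))

/-- A covering `(I,J̄)`-forest: contains the arc `(1,n)` and has no isolated node. -/
def IsCoveringForest (n : ℕ) (I J : Finset ℕ) (F : Finset (ℕ × ℕ)) : Prop :=
  IsIJForest I J F ∧ (1, n) ∈ F ∧
    (∀ i ∈ I, ∃ a ∈ F, a.1 = i) ∧ (∀ j ∈ J, ∃ a ∈ F, a.2 = j)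

/-- The lattice path read off from the interleaving of `I` and `J̄` (elements `2,…,n-1`,
`E` for elements of `I`, `N` for the others). -/
def nuOf (n : ℕ) (I : Finset ℕ) : List Step :=
  (List.range' 2 (n - 2)).map (fun k => if k ∈ I then Step.E else Step.N)

/-!
If `p` has no node above it, let `xs` be the largest column of a node `q` strictly northwest
of `p` such that `(q.1, p.2)` lies in the region (`xs = 0` if there is none). The point
`(xs, p.2)` is compatible with every node: a node northeast of it would either raise `xs`, sit
above `p`, or be incompatible with `p`, and a node southwest of it would be incompatible with the
node realising `xs`. By maximality `(xs, p.2)` is a node, the one to the left of `p`. A node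
above `p` and a node to its left are incompatible, with `p` as the corner of their rectangle.
-/

section BinaryTree

variable {ν : List Step} {T : Finset (ℕ × ℕ)} {p q : ℕ × ℕ}

theorem lowH_zero (ν : List Step) : lowH ν 0 = 0 := by
  cases ν <;> rfl

theorem inRegion_zero_left {y : ℕ} (hy : y ≤ nLen ν) : InRegion ν (0, y) :=
  ⟨Nat.zero_le _, hy, by simp [lowH_zero]⟩

theorem incompat_iff :
    Incompat ν p q ↔ (p.1 < q.1 ∧ p.2 < q.2 ∧ InRegion ν (q.1, p.2)) ∨
      (q.1 < p.1 ∧ q.2 < p.2 ∧ InRegion ν (p.1, q.2)) := by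
  constructor
  · rintro ⟨⟨h1, h2⟩ | ⟨h1, h2⟩, h⟩
    · rw [max_eq_right h1.le, min_eq_left h2.le] at h
      exact Or.inl ⟨h1, h2, h⟩
    · rw [max_eq_left h1.le, min_eq_right h2.le] at h
      exact Or.inr ⟨h1, h2, h⟩
  · rintro (⟨h1, h2, h⟩ | ⟨h1, h2, h⟩)
    · refine ⟨Or.inl ⟨h1, h2⟩, ?_⟩
      rwa [max_eq_right h1.le, min_eq_left h2.le]
    · refine ⟨Or.inr ⟨h1, h2⟩, ?_⟩
      rwa [max_eq_left h1.le, min_eq_right h2.le]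

theorem incompat_of_lt (h1 : p.1 < q.1) (h2 : p.2 < q.2) (h : InRegion ν (q.1, p.2)) :
    Incompat ν p q :=
  incompat_iff.2 (Or.inl ⟨h1, h2, h⟩)

theorem IsBinaryTree.root_mem (hT : IsBinaryTree ν T) : (0, nLen ν) ∈ T := by
  refine hT.2.2 _ (inRegion_zero_left le_rfl) fun q hq hinc => ?_
  rcases incompat_iff.1 hinc with ⟨-, h, -⟩ | ⟨h, -⟩
  · exact (hT.1 q hq).2.1.not_gt h
  · exact Nat.not_lt_zero _ h

theorem IsBinaryTree.not_above_and_left (hT : IsBinaryTree ν T) (hp : p ∈ T) :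
    ¬((∃ q ∈ T, q.1 = p.1 ∧ p.2 < q.2) ∧ (∃ r ∈ T, r.2 = p.2 ∧ r.1 < p.1)) := by
  rintro ⟨⟨q, hq, hq1, hq2⟩, ⟨r, hr, hr2, hr1⟩⟩
  refine hT.2.1 r hr q hq (incompat_of_lt (hq1 ▸ hr1) (hr2 ▸ hq2) ?_)
  rw [hq1, hr2]
  exact hT.1 p hp

instance : DecidablePred (InRegion ν) :=
  fun _ => inferInstanceAs (Decidable (_ ∧ _ ∧ _))

/-- The column `xs` of the proof sketch above. -/
def shadowCol (ν : List Step) (T : Finset (ℕ × ℕ)) (p : ℕ × ℕ) : ℕ :=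
  {q ∈ T | q.1 < p.1 ∧ p.2 < q.2 ∧ InRegion ν (q.1, p.2)}.sup Prod.fst

theorem le_shadowCol (hq : q ∈ T) (h1 : q.1 < p.1) (h2 : p.2 < q.2)
    (h : InRegion ν (q.1, p.2)) : q.1 ≤ shadowCol ν T p :=
  Finset.le_sup (f := Prod.fst) (Finset.mem_filter.2 ⟨hq, h1, h2, h⟩)

theorem shadowCol_lt (hp : 0 < p.1) : shadowCol ν T p < p.1 :=
  (Finset.sup_lt_iff hp).2 fun _ hq => (Finset.mem_filter.1 hq).2.1

theorem exists_of_shadowCol_pos (h : 0 < shadowCol ν T p) :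
    ∃ q ∈ T, q.1 = shadowCol ν T p ∧ p.2 < q.2 ∧ InRegion ν (q.1, p.2) := by
  have hne : {q ∈ T | q.1 < p.1 ∧ p.2 < q.2 ∧ InRegion ν (q.1, p.2)}.Nonempty := by
    rw [Finset.nonempty_iff_ne_empty]
    rintro he
    simp [shadowCol, he] at h
  obtain ⟨q, hq, hqsup⟩ := Finset.exists_mem_eq_sup _ hne Prod.fst
  obtain ⟨hqT, -, h2, hreg⟩ := Finset.mem_filter.1 hq
  exact ⟨q, hqT, by rw [shadowCol, hqsup], h2, hreg⟩

theorem inRegion_shadowCol (hp : InRegion ν p) : InRegion ν (shadowCol ν T p, p.2) := by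
  rcases Nat.eq_zero_or_pos (shadowCol ν T p) with h0 | hpos
  · rw [h0]
    exact inRegion_zero_left hp.2.1
  · obtain ⟨q, -, hq1, -, hreg⟩ := exists_of_shadowCol_pos hpos
    rwa [← hq1]

theorem IsBinaryTree.shadowCol_mem (hT : IsBinaryTree ν T) (hp : p ∈ T)
    (habove : ¬∃ q ∈ T, q.1 = p.1 ∧ p.2 < q.2) : (shadowCol ν T p, p.2) ∈ T := by
  refine hT.2.2 _ (inRegion_shadowCol (hT.1 p hp)) fun q hq hinc => ?_
  rcases incompat_iff.1 hinc with ⟨h1, h2, hreg⟩ | ⟨h1, h2, hreg⟩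
  · rcases lt_trichotomy q.1 p.1 with hlt | heq | hgt
    · exact h1.not_ge (le_shadowCol hq hlt h2 hreg)
    · exact habove ⟨q, hq, heq, h2⟩
    · exact hT.2.1 p hp q hq (incompat_of_lt hgt h2 hreg)
  · obtain ⟨r, hr, hr1, hr2, -⟩ := exists_of_shadowCol_pos (Nat.zero_lt_of_lt h1)
    exact hT.2.1 q hq r hr (incompat_of_lt (hr1 ▸ h1) (h2.trans hr2) (hr1 ▸ hreg))

theorem IsBinaryTree.exists_above_or_left (hT : IsBinaryTree ν T) (hp : p ∈ T)
    (hroot : p ≠ (0, nLen ν)) :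
    (∃ q ∈ T, q.1 = p.1 ∧ p.2 < q.2) ∨ (∃ r ∈ T, r.2 = p.2 ∧ r.1 < p.1) := by
  by_cases habove : ∃ q ∈ T, q.1 = p.1 ∧ p.2 < q.2
  · exact Or.inl habove
  rcases Nat.eq_zero_or_pos p.1 with hx | hx
  · have hy : p.2 < nLen ν := (hT.1 p hp).2.1.lt_of_ne fun hy => hroot (Prod.ext hx hy)
    exact absurd ⟨_, hT.root_mem, hx.symm, hy⟩ habove
  · exact Or.inr ⟨_, hT.shadowCol_mem hp habove, rfl, shadowCol_lt hx⟩

end BinaryTree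

theorem binaryTree_parent_general (ν : List Step)
    (T : Finset (ℕ × ℕ)) (hT : IsBinaryTree ν T)
    (p : ℕ × ℕ) (hp : p ∈ T) (hroot : p ≠ (0, nLen ν)) :
    Xor' (∃ q ∈ T, q.1 = p.1 ∧ p.2 < q.2) (∃ q ∈ T, q.2 = p.2 ∧ q.1 < p.1) :=
  (xor_iff_or_and_not_and _ _).2
    ⟨hT.exists_above_or_left hp hroot, hT.not_above_and_left hp⟩

/-- In a ν-binary tree, every non-root node has either a node strictly above
it in the same column or a node strictly to its left in the same row, but not both. -/
theorem binaryTree_parent (ν : List Step) (hν : IsLatticePath ν)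
    (T : Finset (ℕ × ℕ)) (hT : IsBinaryTree ν T)
    (p : ℕ × ℕ) (hp : p ∈ T) (hroot : p ≠ (0, nLen ν)) :
    Xor' (∃ q ∈ T, q.1 = p.1 ∧ p.2 < q.2) (∃ q ∈ T, q.2 = p.2 ∧ q.1 < p.1) :=
  binaryTree_parent_general ν T hT p hp hroot
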